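/- Suppose $\sigma$ is a $K$-algebra endomorphism of $L$ such that $\sigma(X_n) = \dfrac{P_n}{X_{n-1} P_{n-2}}$ for all $n \in \mathbb{Z}/m\mathbb{Z}$. Then for every $n \in \mathbb{Z}/m\mathbb{Z}$ and every integer $k$ with $2 \le k \le m$ one has $\sigma(D_n^{(k)}) = \dfrac{P_{n-1}}{X_{n-1} X_{n-2} \cdots X_{n-k+1}\, P_{n-k}}\, D_n^{(k)}$. -/

import Mathlib

/-!
Write `S_t(n) = X_n X_{n-1} ⋯ X_{n-t+1}`, so that `D_n^{(k)} = ∑_{p<k} S_p(n)` and `P_n = D_n^{(m)}`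
(for `k ≥ 1`). Since the indices are cyclic, `P_n = X_n P_{n-1} + 1 - ∏_a X_a`; iterating and
eliminating `∏_a X_a` gives `P_{n-k} D_n^{(k+1)} = P_n + X_{n-k} P_{n-k-1} D_n^{(k)}`. The image
`σ(S_k(n))` telescopes to `P_n P_{n-1} / (S_k(n-1) P_{n-k} P_{n-k-1})`, and the theorem follows by
induction on `k` from `σ(D_n^{(k+1)}) = σ(D_n^{(k)}) + σ(S_k(n))` and the identity above. No `P_n`
vanishes, because `σ` is injective and `P_n` is a denominator in `σ(X_{n+2})`.
-/

/- Setting: `Lm K m` is the field of fractions of the (Laurent) polynomial ring over a field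
`K` in commuting variables `yv n` indexed by `n : ZMod m`, with fixed scalars `F n : K`. -/

noncomputable section

variable (K : Type) [Field K] (m : ℕ) [NeZero m]

/-- The ambient field `L`. -/
abbrev Lm := FractionRing (MvPolynomial (ZMod m) K)

/-- The variable `y_n`. -/
def yv (n : ZMod m) : Lm K m :=
  algebraMap (MvPolynomial (ZMod m) K) (Lm K m) (MvPolynomial.X n)

variable (F : ZMod m → K)

/-- The scalar `F_n` viewed inside `L`. -/
def Fc (n : ZMod m) : Lm K m := algebraMap K (Lm K m) (F n)

/-- `X_n = F_n / (y_n y_{n+1})`. -/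
def Xv (n : ZMod m) : Lm K m := Fc K m F n / (yv K m n * yv K m (n + 1))

/-- `P_n = 1 + ∑_{k=0}^{m-2} X_n X_{n-1} ⋯ X_{n-k}`. -/
def Pv (n : ZMod m) : Lm K m :=
  1 + ∑ k ∈ Finset.range (m - 1), ∏ j ∈ Finset.range (k + 1), Xv K m F (n - (j : ZMod m))

/-- `z_n = y_n (1 + X_n)`. -/
def zv (n : ZMod m) : Lm K m := yv K m n * (1 + Xv K m F n)

/-- `𝐲 = ∏_n y_n`. -/
def boldy : Lm K m := ∏ n : ZMod m, yv K m n

/-- `𝐅 = ∏_n F_n` (viewed in `L`). -/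
def boldF : Lm K m := ∏ n : ZMod m, Fc K m F n

/-- `δ = 𝐲 - 𝐅/𝐲`. -/
def deltav : Lm K m := boldy K m - boldF K m F / boldy K m
/-- `D_n^{(k)} = 1 + ∑_{p=0}^{k-2} X_n X_{n-1} ⋯ X_{n-p}` (for `k ≥ 2`). -/
def Dv (n : ZMod m) (k : ℕ) : Lm K m :=
  1 + ∑ p ∈ Finset.range (k - 1), ∏ j ∈ Finset.range (p + 1), Xv K m F (n - (j : ZMod m))

end

section DescendingProducts

open Finset

variable {M : Type*} [CommMonoid M] {m : ℕ} (x : ZMod m → M)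

def descProd (n : ZMod m) (t : ℕ) : M := ∏ j ∈ range t, x (n - j)

@[simp] lemma descProd_zero (n : ZMod m) : descProd x n 0 = 1 := prod_range_zero _

lemma descProd_succ (n : ZMod m) (t : ℕ) : descProd x n (t + 1) = descProd x n t * x (n - t) :=
  prod_range_succ _ _

lemma descProd_succ' (n : ZMod m) (t : ℕ) :
    descProd x n (t + 1) = x n * descProd x (n - 1) t := by
  rw [descProd, prod_range_succ', mul_comm]
  simp only [descProd, Nat.cast_add, Nat.cast_one, Nat.cast_zero, sub_zero, sub_add_eq_sub_sub_swap]

lemma descProd_eq_prod_univ [NeZero m] (n : ZMod m) : descProd x n m = ∏ a, x a := by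
  have hinj : Function.Injective fun i : Fin m => n - (i : ℕ) := fun i j h => by
    have h' : ((i : ℕ) : ZMod m) = (j : ℕ) := sub_right_injective h
    exact Fin.ext (by rw [← ZMod.val_cast_of_lt i.isLt, h', ZMod.val_cast_of_lt j.isLt])
  rw [descProd, prod_range fun j => x (n - j)]
  exact Fintype.prod_bijective _
    ((Fintype.bijective_iff_injective_and_card _).mpr ⟨hinj, by simp⟩) _ _ fun _ => rfl

lemma prod_Icc_eq_descProd (n : ZMod m) (t : ℕ) :
    ∏ j ∈ Icc 1 t, x (n - j) = descProd x (n - 1) t := by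
  rw [← Ico_add_one_right_eq_Icc, prod_Ico_eq_prod_range, Nat.add_sub_cancel, descProd]
  simp only [Nat.cast_add, Nat.cast_one, sub_add_eq_sub_sub]

end DescendingProducts

section DescendingSums

open Finset

variable {R : Type*} [CommSemiring R] {m : ℕ} (x : ZMod m → R)

def descSum (n : ZMod m) (k : ℕ) : R := ∑ p ∈ range k, descProd x n p

@[simp] lemma descSum_zero (n : ZMod m) : descSum x n 0 = 0 := sum_range_zero _

lemma descSum_succ (n : ZMod m) (k : ℕ) : descSum x n (k + 1) = descSum x n k + descProd x n k :=
  sum_range_succ _ _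

lemma descSum_succ' (n : ZMod m) (k : ℕ) :
    descSum x n (k + 1) = 1 + x n * descSum x (n - 1) k := by
  rw [descSum, sum_range_succ', descSum, mul_sum, add_comm]
  simp only [descProd_succ', descProd_zero]

lemma one_add_sum_descProd_succ (n : ZMod m) (k : ℕ) :
    1 + ∑ p ∈ range k, descProd x n (p + 1) = descSum x n (k + 1) := by
  rw [descSum, sum_range_succ', add_comm, descProd_zero]

end DescendingSums

section CyclicIdentities

variable {L : Type*} [CommRing L] {m : ℕ} [NeZero m] (x : ZMod m → L)

lemma descSum_eq_mul_descSum_sub_one_add (n : ZMod m) :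
    descSum x n m = x n * descSum x (n - 1) m + (1 - ∏ a, x a) := by
  have h := descSum_succ x n m
  rw [descSum_succ', descProd_eq_prod_univ] at h
  linear_combination -h

lemma descSum_eq_descProd_mul_add (n : ZMod m) (k : ℕ) :
    descSum x n m = descProd x n k * descSum x (n - k) m + (1 - ∏ a, x a) * descSum x n k := by
  induction k with
  | zero => simp
  | succ k ih =>
    have h := descSum_eq_mul_descSum_sub_one_add x (n - k)
    rw [descProd_succ, descSum_succ, Nat.cast_succ, ← sub_sub]
    linear_combination ih + descProd x n k * h

lemma descSum_sub_mul_descSum_succ (n : ZMod m) (k : ℕ) :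
    descSum x (n - k) m * descSum x n (k + 1) =
      descSum x n m + x (n - k) * descSum x (n - k - 1) m * descSum x n k := by
  rw [descSum_succ]
  linear_combination -descSum_eq_descProd_mul_add x n k +
    descSum x n k * descSum_eq_mul_descSum_sub_one_add x (n - k)

end CyclicIdentities

section Substitution

variable {L : Type*} [Field L] {m : ℕ} {x : ZMod m → L} {σ : L →+* L}

lemma descProd_ne_zero (hx : ∀ n, x n ≠ 0) (n : ZMod m) (t : ℕ) : descProd x n t ≠ 0 :=
  Finset.prod_ne_zero_iff.mpr fun _ _ => hx _

lemma descSum_ne_zero_of_map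
    (hσ : ∀ n, σ (x n) = descSum x n m / (x (n - 1) * descSum x (n - 2) m))
    (hx : ∀ n, x n ≠ 0) (n : ZMod m) : descSum x n m ≠ 0 := by
  intro h
  apply hx (n + 2)
  apply σ.injective
  rw [hσ, map_zero, add_sub_cancel_right, h, mul_zero, div_zero]

lemma map_descProd
    (hσ : ∀ n, σ (x n) = descSum x n m / (x (n - 1) * descSum x (n - 2) m))
    (hx : ∀ n, x n ≠ 0) (n : ZMod m) (k : ℕ) :
    σ (descProd x n k) = descSum x n m * descSum x (n - 1) m /
      (descProd x (n - 1) k * descSum x (n - k) m * descSum x (n - k - 1) m) := by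
  have hP := descSum_ne_zero_of_map hσ hx
  induction k with
  | zero =>
    rw [descProd_zero, descProd_zero, map_one, Nat.cast_zero, sub_zero, one_mul, div_self]
    exact mul_ne_zero (hP n) (hP _)
  | succ k ih =>
    have hS := descProd_ne_zero hx (n - 1) k
    rw [descProd_succ, map_mul, ih, hσ, descProd_succ, Nat.cast_succ, ← sub_sub,
      sub_right_comm n 1, sub_sub _ 1 1, one_add_one_eq_two]
    field_simp [hx, hP, hS]

lemma map_descSum_succ [NeZero m]
    (hσ : ∀ n, σ (x n) = descSum x n m / (x (n - 1) * descSum x (n - 2) m))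
    (hx : ∀ n, x n ≠ 0) (n : ZMod m) (k : ℕ) :
    σ (descSum x n (k + 1)) =
      descSum x (n - 1) m / (descProd x (n - 1) k * descSum x (n - k - 1) m) *
        descSum x n (k + 1) := by
  have hP := descSum_ne_zero_of_map hσ hx
  induction k with
  | zero => simp [descSum_succ, div_self (hP _)]
  | succ k ih =>
    have hS := descProd_ne_zero hx (n - 1) k
    have hrec := descSum_sub_mul_descSum_succ x n (k + 1)
    rw [descSum_succ x n (k + 1)] at hrec ⊢
    rw [map_add, ih, map_descProd hσ hx, descProd_succ x (n - 1) k]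
    simp only [Nat.cast_succ, ← sub_sub, sub_right_comm n 1] at hrec ⊢
    field_simp [hx, hP, hS]
    linear_combination -hrec

end Substitution

section Concrete

variable (K : Type) [Field K] (m : ℕ) (F : ZMod m → K)

variable {F} in
lemma Xv_ne_zero (hF : ∀ n, F n ≠ 0) (n : ZMod m) : Xv K m F n ≠ 0 := by
  have hy : ∀ a, yv K m a ≠ 0 := fun a =>
    (map_ne_zero_iff _ (IsFractionRing.injective _ _)).mpr (MvPolynomial.X_ne_zero a)
  exact div_ne_zero ((map_ne_zero_iff _ (algebraMap K _).injective).mpr (hF n))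
    (mul_ne_zero (hy n) (hy _))

lemma Dv_eq_descSum (n : ZMod m) {k : ℕ} (hk : 1 ≤ k) :
    Dv K m F n k = descSum (Xv K m F) n k := by
  rw [Dv, ← Nat.sub_add_cancel hk, Nat.add_sub_cancel]
  exact one_add_sum_descProd_succ _ n (k - 1)

lemma Pv_eq_descSum [NeZero m] (n : ZMod m) : Pv K m F n = descSum (Xv K m F) n m :=
  Dv_eq_descSum K m F n NeZero.one_le

end Concrete

variable (K : Type) [Field K] (m : ℕ) [NeZero m] (F : ZMod m → K)

theorem stmt_11 (hF : ∀ n, F n ≠ 0)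
    (σ : Lm K m →ₐ[K] Lm K m)
    (hσ : ∀ n : ZMod m, σ (Xv K m F n) = Pv K m F n / (Xv K m F (n - 1) * Pv K m F (n - 2))) :
    ∀ n : ZMod m, ∀ k : ℕ, 2 ≤ k → k ≤ m →
      σ (Dv K m F n k) =
        Pv K m F (n - 1) /
            ((∏ j ∈ Finset.Icc 1 (k - 1), Xv K m F (n - (j : ZMod m))) * Pv K m F (n - (k : ZMod m)))
          * Dv K m F n k := by
  intro n k hk _
  obtain ⟨k, rfl⟩ : ∃ j, k = j + 1 := ⟨k - 1, by omega⟩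
  simp only [Pv_eq_descSum] at hσ ⊢
  rw [Dv_eq_descSum K m F n (by omega), Nat.add_sub_cancel, prod_Icc_eq_descProd, Nat.cast_succ,
    ← sub_sub]
  exact map_descSum_succ (σ := σ.toRingHom) hσ (Xv_ne_zero K m hF) n k
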